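/- Let A, B, C : [0,1] → ℝ be continuous with ∫₀¹ C(t) dt = 0. Suppose there exist real numbers a and b such that the function t ↦ a·A(t)·exp(∫₀ᵗ C(s) ds) + b·B(t) is not identically zero on [0,1] and does not change sign on [0,1]. Then the Abel equation x' = A(t)x³ + B(t)x² + C(t)x has at most one periodic orbit with nonzero initial condition, and every periodic orbit γ with γ(0) ≠ 0 is hyperbolic. -/

import Mathlib

/-- `γ : ℝ → ℝ` solves the general Abel equation `x' = A(t)x³ + B(t)x² + C(t)x` on `[0,1]`. -/
def IsGeneralAbelSolution (A B C : ℝ → ℝ) (γ : ℝ → ℝ) : Prop :=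
  ∀ t ∈ Set.Icc (0:ℝ) 1,
    HasDerivWithinAt γ (A t * γ t ^ 3 + B t * γ t ^ 2 + C t * γ t) (Set.Icc (0:ℝ) 1) t

/-- A periodic orbit: a solution on `[0,1]` with `γ 0 = γ 1`. -/
def IsGeneralPeriodicOrbit (A B C : ℝ → ℝ) (γ : ℝ → ℝ) : Prop :=
  IsGeneralAbelSolution A B C γ ∧ γ 0 = γ 1

/-- A periodic orbit is hyperbolic iff `∫₀¹ (3A(t)γ(t)² + 2B(t)γ(t) + C(t)) dt ≠ 0`. -/
def IsGeneralHyperbolic (A B C : ℝ → ℝ) (γ : ℝ → ℝ) : Prop :=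
  (∫ t in (0:ℝ)..1, (3 * A t * γ t ^ 2 + 2 * B t * γ t + C t)) ≠ 0

/-!
Write `e(t) = exp ∫₀ᵗ C` and `χ = a A e + b B`; after replacing `(a, b)` by `(-a, -b)` we may
assume `χ ≥ 0`. A periodic orbit `γ` with `γ(0) ≠ 0` never vanishes, and `Φ = a e - b γ` solves
the linear equation `Φ' = (C + A γ²) Φ - γ² χ`, whose forcing `γ² χ` is nonnegative and not
identically zero. Since `Φ(0) = Φ(1)`, the integrating factor `exp (-∫ (C + A γ²))` shows that
`Φ` never vanishes and that `∫₀¹ (C + A γ²) ≠ 0`. As `∫₀¹ (A γ² + B γ + C) = 0` (integrate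
`γ'/γ`) and `∫₀¹ C = 0`, this integral equals `∫₀¹ (3 A γ² + 2 B γ + C)`: `γ` is hyperbolic.

The substitution `w = e / γ` turns `∫₀¹ e² (A γ + B) / Φ` into the integral of
`w / (a w - b) dw` over a closed loop, so it vanishes. For two orbits, the difference of these
integrals is `∫₀¹ χ e² (γ₁ - γ₂) / (Φ₁ Φ₂)`; distinct orbits never cross, so the second factor has
constant sign and the integral cannot vanish.
-/

open Set MeasureTheory

section Calculus

variable {f f' k g : ℝ → ℝ} {a b : ℝ}

theorem integral_eq_sub_of_hasDerivWithinAt_Icc (hab : a ≤ b)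
    (hf : ∀ t ∈ Icc a b, HasDerivWithinAt f (f' t) (Icc a b) t)
    (hf' : ContinuousOn f' (Icc a b)) :
    ∫ t in a..b, f' t = f b - f a :=
  intervalIntegral.integral_eq_sub_of_hasDerivAt_of_le hab
    (fun t ht => (hf t ht).continuousWithinAt)
    (fun t ht => (hf t (Ioo_subset_Icc_self ht)).hasDerivAt (Icc_mem_nhds ht.1 ht.2))
    (hf'.intervalIntegrable_of_Icc hab)

theorem hasDerivWithinAt_integral_Icc (hk : ContinuousOn k (Icc a b)) {t : ℝ}
    (ht : t ∈ Icc a b) :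
    HasDerivWithinAt (fun u => ∫ s in a..u, k s) (k t) (Icc a b) t := by
  have : Fact (t ∈ Icc a b) := ⟨ht⟩
  refine intervalIntegral.integral_hasDerivWithinAt_right ?_
    (hk.stronglyMeasurableAtFilter_nhdsWithin measurableSet_Icc t) (hk t ht)
  exact (hk.mono (Icc_subset_Icc_right ht.2)).intervalIntegrable_of_Icc ht.1

theorem integral_pos_of_continuousOn_of_nonneg_of_ne_zero (hab : a < b)
    (hf : ContinuousOn f (Icc a b)) (hf0 : ∀ t ∈ Icc a b, 0 ≤ f t)
    (hne : ∃ t ∈ Icc a b, f t ≠ 0) :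
    0 < ∫ t in a..b, f t := by
  obtain ⟨c, hc, hfc⟩ := hne
  simpa using intervalIntegral.integral_lt_integral_of_continuousOn_of_le_of_exists_lt hab
    continuousOn_const hf (fun t ht => hf0 t (Ioc_subset_Icc_self ht))
    ⟨c, hc, (hf0 c hc).lt_of_ne' hfc⟩

theorem integral_mul_ne_zero_of_nonneg_of_ne_zero (hab : a < b)
    (hf : ContinuousOn f (Icc a b)) (hg : ContinuousOn g (Icc a b))
    (hf0 : ∀ t ∈ Icc a b, 0 ≤ f t) (hfne : ∃ t ∈ Icc a b, f t ≠ 0)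
    (hg0 : ∀ t ∈ Icc a b, g t ≠ 0) :
    ∫ t in a..b, f t * g t ≠ 0 := by
  obtain ⟨c, hc, hfc⟩ := hfne
  rcases isPreconnected_Icc.mapsTo_Ioi_or_Iio hg hg0 with hpos | hneg
  · refine (integral_pos_of_continuousOn_of_nonneg_of_ne_zero hab (hf.mul hg)
      (fun t ht => mul_nonneg (hf0 t ht) (hpos ht).le) ⟨c, hc, mul_ne_zero hfc (hg0 c hc)⟩).ne'
  · rw [← neg_ne_zero, ← intervalIntegral.integral_neg]
    refine (integral_pos_of_continuousOn_of_nonneg_of_ne_zero hab (hf.mul hg).neg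
      (fun t ht => neg_nonneg.2 (mul_nonpos_of_nonneg_of_nonpos (hf0 t ht) (hneg ht).le))
      ⟨c, hc, neg_ne_zero.2 (mul_ne_zero hfc (hg0 c hc))⟩).ne'

theorem hasDerivWithinAt_mul_exp_neg_integral (hk : ContinuousOn k (Icc a b))
    (hf : ∀ t ∈ Icc a b, HasDerivWithinAt f (k t * f t + g t) (Icc a b) t)
    {t : ℝ} (ht : t ∈ Icc a b) :
    HasDerivWithinAt (fun u => f u * Real.exp (-∫ s in a..u, k s))
      (g t * Real.exp (-∫ s in a..t, k s)) (Icc a b) t :=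
  ((hf t ht).mul (hasDerivWithinAt_integral_Icc hk ht).neg.exp).congr_deriv
    (by simp only [Pi.neg_apply]; ring)

theorem mul_exp_neg_integral_eq_of_hasDerivWithinAt (hk : ContinuousOn k (Icc a b))
    (hf : ∀ t ∈ Icc a b, HasDerivWithinAt f (k t * f t) (Icc a b) t)
    {t : ℝ} (ht : t ∈ Icc a b) :
    f t * Real.exp (-∫ s in a..t, k s) = f a := by
  have hF : ∀ u ∈ Icc a t, HasDerivWithinAt (fun u => f u * Real.exp (-∫ s in a..u, k s))
      0 (Icc a t) u := fun u hu =>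
    ((hasDerivWithinAt_mul_exp_neg_integral (g := 0) hk (by simpa using hf)
      ⟨hu.1, hu.2.trans ht.2⟩).mono (Icc_subset_Icc_right ht.2)).congr_deriv (by simp)
  have := integral_eq_sub_of_hasDerivWithinAt_Icc ht.1 hF continuousOn_const
  simp only [intervalIntegral.integral_zero, intervalIntegral.integral_same, neg_zero,
    Real.exp_zero, mul_one] at this
  linarith

theorem eqOn_zero_of_hasDerivWithinAt_mul (hk : ContinuousOn k (Icc a b))
    (hf : ∀ t ∈ Icc a b, HasDerivWithinAt f (k t * f t) (Icc a b) t)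
    {t₀ : ℝ} (ht₀ : t₀ ∈ Icc a b) (h₀ : f t₀ = 0) :
    EqOn f 0 (Icc a b) := by
  intro t ht
  have hfa : f a = 0 := by
    rw [← mul_exp_neg_integral_eq_of_hasDerivWithinAt hk hf ht₀, h₀, zero_mul]
  simpa [hfa, Real.exp_ne_zero] using mul_exp_neg_integral_eq_of_hasDerivWithinAt hk hf ht

theorem integral_eq_zero_of_hasDerivWithinAt_mul (hab : a ≤ b) (hk : ContinuousOn k (Icc a b))
    (hf : ∀ t ∈ Icc a b, HasDerivWithinAt f (k t * f t) (Icc a b) t)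
    (hper : f a = f b) (hfa : f a ≠ 0) :
    ∫ s in a..b, k s = 0 := by
  have h := mul_exp_neg_integral_eq_of_hasDerivWithinAt hk hf (right_mem_Icc.2 hab)
  rw [← hper, mul_eq_left₀ hfa, Real.exp_eq_one_iff, neg_eq_zero] at h
  exact h

theorem integral_mul_exp_neg_integral_eq_of_hasDerivWithinAt {p q : ℝ → ℝ}
    (hp : ContinuousOn p (Icc a b)) (hq : ContinuousOn q (Icc a b))
    (hf : ∀ t ∈ Icc a b, HasDerivWithinAt f (p t * f t - q t) (Icc a b) t)
    {s t : ℝ} (hs : s ∈ Icc a b) (ht : t ∈ Icc a b) (hst : s ≤ t) :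
    ∫ u in s..t, q u * Real.exp (-∫ r in a..u, p r) =
      f s * Real.exp (-∫ r in a..s, p r) - f t * Real.exp (-∫ r in a..t, p r) := by
  have hsub : Icc s t ⊆ Icc a b := Icc_subset_Icc hs.1 ht.2
  have hE : ContinuousOn (fun u => Real.exp (-∫ r in a..u, p r)) (Icc a b) := fun u hu =>
    (hasDerivWithinAt_integral_Icc hp hu).continuousWithinAt.neg.rexp
  rw [← neg_sub, ← integral_eq_sub_of_hasDerivWithinAt_Icc hst (fun u hu =>
      ((hasDerivWithinAt_mul_exp_neg_integral hp (g := fun u => -q u)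
        (fun u hu => by simpa only [sub_eq_add_neg] using hf u hu) (hsub hu)).mono hsub))
      ((hq.neg.mul hE).mono hsub), ← intervalIntegral.integral_neg]
  simp only [neg_mul, neg_neg]

theorem ne_zero_and_integral_ne_zero_of_hasDerivWithinAt_mul_sub {p q : ℝ → ℝ} (hab : a < b)
    (hp : ContinuousOn p (Icc a b)) (hq : ContinuousOn q (Icc a b))
    (hq0 : ∀ t ∈ Icc a b, 0 ≤ q t) (hqne : ∃ t ∈ Icc a b, q t ≠ 0)
    (hf : ∀ t ∈ Icc a b, HasDerivWithinAt f (p t * f t - q t) (Icc a b) t)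
    (hper : f a = f b) :
    (∀ t ∈ Icc a b, f t ≠ 0) ∧ ∫ s in a..b, p s ≠ 0 := by
  set E : ℝ → ℝ := fun u => Real.exp (-∫ s in a..u, p s) with hE
  have hEc : ContinuousOn E (Icc a b) := fun t ht =>
    (hasDerivWithinAt_integral_Icc hp ht).continuousWithinAt.neg.rexp
  have hqE0 : ∀ t ∈ Icc a b, 0 ≤ q t * E t := fun t ht => mul_nonneg (hq0 t ht) (Real.exp_pos _).le
  have hdrop : ∀ s ∈ Icc a b, ∀ t ∈ Icc a b, s ≤ t →
      ∫ u in s..t, q u * E u = f s * E s - f t * E t := fun s hs t ht hst =>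
    integral_mul_exp_neg_integral_eq_of_hasDerivWithinAt hp hq hf hs ht hst
  have ha : a ∈ Icc a b := left_mem_Icc.2 hab.le
  have hb : b ∈ Icc a b := right_mem_Icc.2 hab.le
  have hEa : E a = 1 := by simp [hE]
  have hdecrease : f a * (E b - 1) < 0 := by
    have := hdrop a ha b hb hab.le
    have hQ := integral_pos_of_continuousOn_of_nonneg_of_ne_zero (f := fun u => q u * E u) hab
      (hq.mul hEc) hqE0
      (by obtain ⟨t, ht, hqt⟩ := hqne; exact ⟨t, ht, mul_ne_zero hqt (Real.exp_pos _).ne'⟩)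
    rw [hEa, ← hper] at this
    linarith
  have hanti : ∀ s ∈ Icc a b, ∀ t ∈ Icc a b, s ≤ t → f t * E t ≤ f s * E s := by
    intro s hs t ht hst
    have := intervalIntegral.integral_nonneg (μ := volume) hst
      fun u hu => hqE0 u (Icc_subset_Icc hs.1 ht.2 hu)
    linarith [hdrop s hs t ht hst]
  refine ⟨fun t ht hft => ?_, fun hP => ?_⟩
  -- a zero of `f` would give `f a ≥ 0 ≥ f a * E b`, so `f a = 0`
  · have h₁ := hanti a ha t ht ht.1
    have h₂ := hanti t ht b hb ht.2
    rw [hft, zero_mul, hEa, mul_one] at h₁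
    rw [hft, zero_mul, ← hper] at h₂
    have hEb : 0 < E b := Real.exp_pos _
    nlinarith [mul_nonneg h₁ hEb.le]
  · have hEb : E b = 1 := by simp [hE, hP]
    simp [hEb] at hdecrease

theorem integral_comp_mul_eq_zero_of_eq {w w' : ℝ → ℝ} (hab : a ≤ b)
    (hw : ∀ t ∈ Icc a b, HasDerivWithinAt w (w' t) (Icc a b) t)
    (hw' : ContinuousOn w' (Icc a b)) (hg : ContinuousOn g (w '' Icc a b)) (hper : w a = w b) :
    ∫ t in a..b, g (w t) * w' t = 0 := by
  have hderiv : ∀ t ∈ Ioo (min a b) (max a b), HasDerivWithinAt w (w' t) (Ioi t) t := by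
    intro t ht
    rw [min_eq_left hab, max_eq_right hab] at ht
    exact ((hw t (Ioo_subset_Icc_self ht)).hasDerivAt (Icc_mem_nhds ht.1 ht.2)).hasDerivWithinAt
  have hcont : ContinuousOn w (uIcc a b) := by
    rw [uIcc_of_le hab]; exact fun t ht => (hw t ht).continuousWithinAt
  rw [← uIcc_of_le hab] at hw' hg
  have := intervalIntegral.integral_comp_mul_deriv'' hcont hderiv hw' hg
  rw [hper, intervalIntegral.integral_same] at this
  exact this

end Calculus

noncomputable def expPrimitive (C : ℝ → ℝ) (t : ℝ) : ℝ :=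
  Real.exp (∫ s in (0:ℝ)..t, C s)

section Abel

variable {A B C γ γ₁ γ₂ : ℝ → ℝ} {a b : ℝ}

theorem hasDerivWithinAt_expPrimitive (hC : ContinuousOn C (Icc 0 1)) {t : ℝ}
    (ht : t ∈ Icc (0:ℝ) 1) :
    HasDerivWithinAt (expPrimitive C) (C t * expPrimitive C t) (Icc 0 1) t :=
  ((hasDerivWithinAt_integral_Icc hC ht).exp).congr_deriv (mul_comm _ _)

theorem continuousOn_expPrimitive (hC : ContinuousOn C (Icc 0 1)) :
    ContinuousOn (expPrimitive C) (Icc 0 1) := fun _ ht =>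
  (hasDerivWithinAt_expPrimitive hC ht).continuousWithinAt

theorem expPrimitive_zero : expPrimitive C 0 = 1 := by
  simp [expPrimitive]

theorem expPrimitive_one (hC0 : ∫ t in (0:ℝ)..1, C t = 0) : expPrimitive C 1 = 1 := by
  simp [expPrimitive, hC0]

theorem IsGeneralAbelSolution.continuousOn (hγ : IsGeneralAbelSolution A B C γ) :
    ContinuousOn γ (Icc 0 1) := fun t ht => (hγ t ht).continuousWithinAt

theorem IsGeneralAbelSolution.hasDerivWithinAt (hγ : IsGeneralAbelSolution A B C γ) {t : ℝ}
    (ht : t ∈ Icc (0:ℝ) 1) :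
    HasDerivWithinAt γ ((A t * γ t ^ 2 + B t * γ t + C t) * γ t) (Icc 0 1) t :=
  (hγ t ht).congr_deriv (by ring)

theorem IsGeneralAbelSolution.eqOn_of_eq (hA : ContinuousOn A (Icc 0 1))
    (hB : ContinuousOn B (Icc 0 1)) (hC : ContinuousOn C (Icc 0 1))
    (h₁ : IsGeneralAbelSolution A B C γ₁) (h₂ : IsGeneralAbelSolution A B C γ₂)
    {t₀ : ℝ} (ht₀ : t₀ ∈ Icc (0:ℝ) 1) (heq : γ₁ t₀ = γ₂ t₀) :
    EqOn γ₁ γ₂ (Icc 0 1) := by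
  have hc₁ := h₁.continuousOn
  have hc₂ := h₂.continuousOn
  have hk : ContinuousOn (fun t => A t * (γ₁ t ^ 2 + γ₁ t * γ₂ t + γ₂ t ^ 2)
      + B t * (γ₁ t + γ₂ t) + C t) (Icc 0 1) := by fun_prop
  intro t ht
  have := eqOn_zero_of_hasDerivWithinAt_mul hk (f := fun t => γ₁ t - γ₂ t)
    (fun t ht => ((h₁ t ht).sub (h₂ t ht)).congr_deriv (by ring)) ht₀ (sub_eq_zero.2 heq) ht
  exact sub_eq_zero.1 this

theorem IsGeneralAbelSolution.ne_zero (hA : ContinuousOn A (Icc 0 1))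
    (hB : ContinuousOn B (Icc 0 1)) (hC : ContinuousOn C (Icc 0 1))
    (hγ : IsGeneralAbelSolution A B C γ) (hγ0 : γ 0 ≠ 0) {t : ℝ} (ht : t ∈ Icc (0:ℝ) 1) :
    γ t ≠ 0 := by
  have hc := hγ.continuousOn
  intro h
  exact hγ0 (eqOn_zero_of_hasDerivWithinAt_mul (by fun_prop) (fun t ht => hγ.hasDerivWithinAt ht)
    ht h (left_mem_Icc.2 zero_le_one))

theorem IsGeneralPeriodicOrbit.ne_zero_and_integral_ne_zero (hA : ContinuousOn A (Icc 0 1))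
    (hB : ContinuousOn B (Icc 0 1)) (hC : ContinuousOn C (Icc 0 1))
    (hC0 : ∫ t in (0:ℝ)..1, C t = 0)
    (hχ : ∀ t ∈ Icc (0:ℝ) 1, 0 ≤ a * A t * expPrimitive C t + b * B t)
    (hχne : ∃ t ∈ Icc (0:ℝ) 1, a * A t * expPrimitive C t + b * B t ≠ 0)
    (hγ : IsGeneralPeriodicOrbit A B C γ) (hγ0 : γ 0 ≠ 0) :
    (∀ t ∈ Icc (0:ℝ) 1, a * expPrimitive C t - b * γ t ≠ 0) ∧
      ∫ t in (0:ℝ)..1, (C t + A t * γ t ^ 2) ≠ 0 := by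
  have hc := hγ.1.continuousOn
  have he := continuousOn_expPrimitive hC
  obtain ⟨t₁, ht₁, hχt₁⟩ := hχne
  refine ne_zero_and_integral_ne_zero_of_hasDerivWithinAt_mul_sub zero_lt_one (by fun_prop)
    (q := fun t => γ t ^ 2 * (a * A t * expPrimitive C t + b * B t)) (by fun_prop)
    (fun t ht => mul_nonneg (sq_nonneg _) (hχ t ht))
    ⟨t₁, ht₁, mul_ne_zero (pow_ne_zero 2 (hγ.1.ne_zero hA hB hC hγ0 ht₁)) hχt₁⟩
    (fun t ht => (((hasDerivWithinAt_expPrimitive hC ht).const_mul a).sub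
      ((hγ.1 t ht).const_mul b)).congr_deriv (by ring)) ?_
  simp [expPrimitive_zero, expPrimitive_one hC0, hγ.2]

theorem IsGeneralPeriodicOrbit.isGeneralHyperbolic_of_integral_ne_zero
    (hA : ContinuousOn A (Icc 0 1))
    (hB : ContinuousOn B (Icc 0 1)) (hC : ContinuousOn C (Icc 0 1))
    (hC0 : ∫ t in (0:ℝ)..1, C t = 0) (hγ : IsGeneralPeriodicOrbit A B C γ) (hγ0 : γ 0 ≠ 0)
    (hp : ∫ t in (0:ℝ)..1, (C t + A t * γ t ^ 2) ≠ 0) :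
    IsGeneralHyperbolic A B C γ := by
  have hc := hγ.1.continuousOn
  have hk : ContinuousOn (fun t => A t * γ t ^ 2 + B t * γ t + C t) (Icc 0 1) := by fun_prop
  have hlog : ∫ t in (0:ℝ)..1, (A t * γ t ^ 2 + B t * γ t + C t) = 0 :=
    integral_eq_zero_of_hasDerivWithinAt_mul zero_le_one hk (fun t ht => hγ.1.hasDerivWithinAt ht)
      hγ.2 hγ0
  have hint {f : ℝ → ℝ} (hf : ContinuousOn f (Icc 0 1)) : IntervalIntegrable f volume 0 1 :=
    hf.intervalIntegrable_of_Icc zero_le_one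
  have hsplit : ∫ t in (0:ℝ)..1, (3 * A t * γ t ^ 2 + 2 * B t * γ t + C t) =
      (2 * ∫ t in (0:ℝ)..1, (A t * γ t ^ 2 + B t * γ t + C t))
        + (∫ t in (0:ℝ)..1, (C t + A t * γ t ^ 2)) - 2 * ∫ t in (0:ℝ)..1, C t := by
    rw [← intervalIntegral.integral_const_mul, ← intervalIntegral.integral_const_mul,
      ← intervalIntegral.integral_add (hint (by fun_prop)) (hint (by fun_prop)),
      ← intervalIntegral.integral_sub (hint (by fun_prop)) (hint (by fun_prop))]
    congr 1 with t
    ring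
  rw [IsGeneralHyperbolic, hsplit, hlog, hC0]
  simpa using hp

theorem IsGeneralPeriodicOrbit.integral_div_eq_zero (hA : ContinuousOn A (Icc 0 1))
    (hB : ContinuousOn B (Icc 0 1)) (hC : ContinuousOn C (Icc 0 1))
    (hC0 : ∫ t in (0:ℝ)..1, C t = 0) (hγ : IsGeneralPeriodicOrbit A B C γ) (hγ0 : γ 0 ≠ 0)
    (hΦ : ∀ t ∈ Icc (0:ℝ) 1, a * expPrimitive C t - b * γ t ≠ 0) :
    ∫ t in (0:ℝ)..1,
      expPrimitive C t ^ 2 * (A t * γ t + B t) / (a * expPrimitive C t - b * γ t) = 0 := by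
  have hc := hγ.1.continuousOn
  have he := continuousOn_expPrimitive hC
  have hne : ∀ t ∈ Icc (0:ℝ) 1, γ t ≠ 0 := fun t ht => hγ.1.ne_zero hA hB hC hγ0 ht
  -- `w = e / γ` satisfies `w' = -e (A γ + B)` and `e / Φ = w / (a w - b)`
  have hw : ∀ t ∈ Icc (0:ℝ) 1, HasDerivWithinAt (fun t => expPrimitive C t / γ t)
      (-(expPrimitive C t * (A t * γ t + B t))) (Icc 0 1) t := fun t ht =>
    ((hasDerivWithinAt_expPrimitive hC ht).div (hγ.1 t ht) (hne t ht)).congr_deriv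
      (by field_simp [hne t ht]; ring)
  have hg : ContinuousOn (fun y => y / (a * y - b))
      ((fun t => expPrimitive C t / γ t) '' Icc 0 1) := by
    refine continuousOn_id.div (by fun_prop) ?_
    rintro _ ⟨t, ht, rfl⟩
    convert div_ne_zero (hΦ t ht) (hne t ht) using 1
    field_simp [hne t ht]
  have hw' : ContinuousOn (fun t => -(expPrimitive C t * (A t * γ t + B t))) (Icc 0 1) := by
    fun_prop
  have hloop := integral_comp_mul_eq_zero_of_eq zero_le_one hw hw' hg
    (by simp [expPrimitive_zero, expPrimitive_one hC0, hγ.2])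
  rw [intervalIntegral.integral_congr (g := fun t => -((expPrimitive C t / γ t)
    / (a * (expPrimitive C t / γ t) - b) * -(expPrimitive C t * (A t * γ t + B t)))) ?_,
    intervalIntegral.integral_neg, hloop, neg_zero]
  intro t ht
  rw [uIcc_of_le zero_le_one] at ht
  have hΦt := hΦ t ht
  have hγt := hne t ht
  field_simp

theorem IsGeneralPeriodicOrbit.eqOn (hA : ContinuousOn A (Icc 0 1))
    (hB : ContinuousOn B (Icc 0 1)) (hC : ContinuousOn C (Icc 0 1))
    (hC0 : ∫ t in (0:ℝ)..1, C t = 0)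
    (hχ : ∀ t ∈ Icc (0:ℝ) 1, 0 ≤ a * A t * expPrimitive C t + b * B t)
    (hχne : ∃ t ∈ Icc (0:ℝ) 1, a * A t * expPrimitive C t + b * B t ≠ 0)
    (h₁ : IsGeneralPeriodicOrbit A B C γ₁) (h₂ : IsGeneralPeriodicOrbit A B C γ₂)
    (h₁0 : γ₁ 0 ≠ 0) (h₂0 : γ₂ 0 ≠ 0) :
    EqOn γ₁ γ₂ (Icc 0 1) := by
  by_contra hne
  have hd : ∀ t ∈ Icc (0:ℝ) 1, γ₁ t - γ₂ t ≠ 0 := fun t ht hd =>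
    hne (h₁.1.eqOn_of_eq hA hB hC h₂.1 ht (sub_eq_zero.1 hd))
  obtain ⟨hΦ₁, -⟩ := h₁.ne_zero_and_integral_ne_zero hA hB hC hC0 hχ hχne h₁0
  obtain ⟨hΦ₂, -⟩ := h₂.ne_zero_and_integral_ne_zero hA hB hC hC0 hχ hχne h₂0
  have hc₁ := h₁.1.continuousOn
  have hc₂ := h₂.1.continuousOn
  have he := continuousOn_expPrimitive hC
  have hint {γ : ℝ → ℝ} (hc : ContinuousOn γ (Icc 0 1))
      (hΦ : ∀ t ∈ Icc (0:ℝ) 1, a * expPrimitive C t - b * γ t ≠ 0) :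
      IntervalIntegrable (fun t => expPrimitive C t ^ 2 * (A t * γ t + B t)
        / (a * expPrimitive C t - b * γ t)) volume 0 1 :=
    (ContinuousOn.div (by fun_prop) (by fun_prop) hΦ).intervalIntegrable_of_Icc zero_le_one
  -- the difference of the two vanishing integrals is `∫ χ e² (γ₁ - γ₂) / (Φ₁ Φ₂)`
  refine integral_mul_ne_zero_of_nonneg_of_ne_zero zero_lt_one
    (f := fun t => a * A t * expPrimitive C t + b * B t)
    (g := fun t => expPrimitive C t ^ 2 * (γ₁ t - γ₂ t)
      / ((a * expPrimitive C t - b * γ₁ t) * (a * expPrimitive C t - b * γ₂ t)))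
    (by fun_prop) (ContinuousOn.div (by fun_prop) (by fun_prop)
      fun t ht => mul_ne_zero (hΦ₁ t ht) (hΦ₂ t ht)) hχ hχne
    (fun t ht => div_ne_zero (mul_ne_zero (pow_ne_zero 2 (Real.exp_pos _).ne') (hd t ht))
      (mul_ne_zero (hΦ₁ t ht) (hΦ₂ t ht))) ?_
  refine (?_ : _ = _ - _).trans (sub_eq_zero_of_eq
    ((h₁.integral_div_eq_zero hA hB hC hC0 h₁0 hΦ₁).trans
      (h₂.integral_div_eq_zero hA hB hC hC0 h₂0 hΦ₂).symm))
  rw [← intervalIntegral.integral_sub (hint hc₁ hΦ₁) (hint hc₂ hΦ₂)]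
  refine intervalIntegral.integral_congr fun t ht => ?_
  rw [uIcc_of_le zero_le_one] at ht
  have hΦ₁t := hΦ₁ t ht
  have hΦ₂t := hΦ₂ t ht
  field_simp
  ring

end Abel

theorem general_abel_uniqueness_zero_mean_C
    (A B C : ℝ → ℝ)
    (hA : ContinuousOn A (Set.Icc 0 1)) (hB : ContinuousOn B (Set.Icc 0 1))
    (hC : ContinuousOn C (Set.Icc 0 1))
    (hC0 : (∫ t in (0:ℝ)..1, C t) = 0)
    (a b : ℝ)
    (h_not_ident_zero : ¬ ∀ t ∈ Set.Icc (0:ℝ) 1,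
      a * A t * Real.exp (∫ s in (0:ℝ)..t, C s) + b * B t = 0)
    (h_sign :
      (∀ t ∈ Set.Icc (0:ℝ) 1,
        0 ≤ a * A t * Real.exp (∫ s in (0:ℝ)..t, C s) + b * B t) ∨
      (∀ t ∈ Set.Icc (0:ℝ) 1,
        a * A t * Real.exp (∫ s in (0:ℝ)..t, C s) + b * B t ≤ 0)) :
    (∀ γ₁ γ₂ : ℝ → ℝ,
      IsGeneralPeriodicOrbit A B C γ₁ → IsGeneralPeriodicOrbit A B C γ₂ →
      γ₁ 0 ≠ 0 → γ₂ 0 ≠ 0 → Set.EqOn γ₁ γ₂ (Set.Icc 0 1)) ∧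
    (∀ γ : ℝ → ℝ, IsGeneralPeriodicOrbit A B C γ → γ 0 ≠ 0 →
      IsGeneralHyperbolic A B C γ) := by
  wlog hχ : ∀ t ∈ Icc (0:ℝ) 1, 0 ≤ a * A t * expPrimitive C t + b * B t generalizing a b
  · refine this (-a) (-b) ?_ (Or.inl ?_) ?_ <;>
      simp only [neg_mul, ← neg_add, neg_eq_zero, neg_nonneg]
    · exact h_not_ident_zero
    · exact h_sign.resolve_left hχ
    · exact h_sign.resolve_left hχ
  push Not at h_not_ident_zero
  exact ⟨fun γ₁ γ₂ h₁ h₂ h₁0 h₂0 => h₁.eqOn hA hB hC hC0 hχ h_not_ident_zero h₂ h₁0 h₂0,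
    fun γ hγ hγ0 => hγ.isGeneralHyperbolic_of_integral_ne_zero hA hB hC hC0 hγ0
      (hγ.ne_zero_and_integral_ne_zero hA hB hC hC0 hχ h_not_ident_zero hγ0).2⟩
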